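/- arXiv:2209.09337 — 3 statements merged into one kernel-verified Lean document; each statement's English description precedes it below -/
import Mathlib

section
/- Let (Ω, 𝓕, P) be a probability space and let g : Ω → ℝ be measurable. For a sample set (ω₁, …, ω_N) ∈ Ω^N, define the scenario solution r*_N = max_{1 ≤ l ≤ N} g(ω_l) (the solution of the one-dimensional scenario program minimizing r subject to r ≥ g(ω_l) for all l), and define the violation probability V(r) = P[{ω ∈ Ω : g(ω) > r}]. Then for every ε ∈ [0,1], the product measure P^N of the set of sample tuples (ω₁, …, ω_N) ∈ Ω^N with V(r*_N) > ε is at most (1 − ε)^N. -/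
open MeasureTheory

/-!
If the violation probability of the maximum `r*_N` exceeds `ε`, so does that of every sample
`g ωₗ ≤ r*_N`; hence the bad event is contained in the product event "`V (g ωₗ) > ε` for every
`l`", whose probability is the `N`-th power of `P {x | V (g x) > ε}`. This last probability is
at most `1 - ε` (a probability integral transform inequality): by inner regularity it suffices to
bound `P (g ∈ K)` for compact `K ⊆ {t | V t > ε}`, and `K ⊆ Iic m` for its maximum `m`, with
`P (g ≤ m) = 1 - V m < 1 - ε`.
-/

open Set
open scoped ENNReal

theorem antitone_measure_Ioi {α : Type*} [Preorder α] [MeasurableSpace α] (ν : Measure α) :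
    Antitone fun t => ν (Ioi t) :=
  fun _ _ hst => measure_mono (Ioi_subset_Ioi hst)

section ProbabilityIntegralTransform

variable {α : Type*} [LinearOrder α] [TopologicalSpace α] [OrderClosedTopology α]
  [MeasurableSpace α] [BorelSpace α]

theorem measurableSet_setOf_lt_measure_Ioi (ν : Measure α) (e : ℝ≥0∞) :
    MeasurableSet {t | e < ν (Ioi t)} :=
  measurableSet_lt measurable_const (antitone_measure_Ioi ν).measurable

theorem measure_setOf_lt_measure_Ioi_le (ν : Measure α) [IsProbabilityMeasure ν]
    [ν.InnerRegular] (e : ℝ≥0∞) : ν {t | e < ν (Ioi t)} ≤ 1 - e := by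
  rw [(measurableSet_setOf_lt_measure_Ioi ν e).measure_eq_iSup_isCompact]
  refine iSup_le fun K => iSup_le fun hK => iSup_le fun hKc => ?_
  obtain rfl | hKne := K.eq_empty_or_nonempty
  · simp
  obtain ⟨m, hmK, hm⟩ := hKc.exists_isGreatest hKne
  calc ν K ≤ ν (Iic m) := measure_mono fun x hx => hm hx
    _ = 1 - ν (Ioi m) := by rw [← compl_Ioi, prob_compl_eq_one_sub measurableSet_Ioi]
    _ ≤ 1 - e := tsub_le_tsub_left (hK hmK).le 1

end ProbabilityIntegralTransform

/-- Scenario optimization bound in dimension `d = 1`: for the one-dimensional scenario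
program `min r` subject to `r ≥ g ωₗ` for all sampled `ωₗ`, whose unique solution is
`r*_N = max_l g ωₗ`, the probability (under the `N`-fold product measure) that the
violation probability `V(r*_N) = P {ω | g ω > r*_N}` exceeds `ε` is at most `(1 - ε)^N`. -/
theorem scenario_opt_dim_one
    {Ω : Type*} [MeasurableSpace Ω] (P : Measure Ω) [IsProbabilityMeasure P]
    (g : Ω → ℝ) (hg : Measurable g)
    (N : ℕ) (hN : 0 < N) (ε : ℝ) (hε : ε ∈ Set.Icc (0 : ℝ) 1) :
    (Measure.pi fun _ : Fin N => P)
      {ω : Fin N → Ω |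
        P {x : Ω |
            g x >
              Finset.univ.sup'
                (Finset.univ_nonempty_iff.mpr (Fin.pos_iff_nonempty.mp hN))
                (fun l => g (ω l))} > ENNReal.ofReal ε}
      ≤ ENNReal.ofReal ((1 - ε) ^ N) := by
  set ν := P.map g
  have : IsProbabilityMeasure ν := Measure.isProbabilityMeasure_map hg.aemeasurable
  have hV : ∀ r, P {x | g x > r} = ν (Ioi r) := fun r =>
    (Measure.map_apply hg measurableSet_Ioi).symm
  calc (Measure.pi fun _ : Fin N => P) _
      ≤ (Measure.pi fun _ : Fin N => P)
          (univ.pi fun _ => g ⁻¹' {t | ENNReal.ofReal ε < ν (Ioi t)}) := by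
        refine measure_mono fun ω hω l _ => ?_
        change ENNReal.ofReal ε < P _ at hω
        rw [hV] at hω
        exact hω.trans_le <|
          antitone_measure_Ioi ν (Finset.le_sup' (fun l => g (ω l)) (Finset.mem_univ l))
    _ = ν {t | ENNReal.ofReal ε < ν (Ioi t)} ^ N := by
        rw [Measure.pi_pi, Finset.prod_const, Finset.card_fin,
          Measure.map_apply hg (measurableSet_setOf_lt_measure_Ioi ν _)]
    _ ≤ (1 - ENNReal.ofReal ε) ^ N := pow_le_pow_left' (measure_setOf_lt_measure_Ioi_le ν _) N
    _ = ENNReal.ofReal ((1 - ε) ^ N) := by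
        rw [ENNReal.ofReal_pow (sub_nonneg.2 hε.2), ENNReal.ofReal_sub _ hε.1, ENNReal.ofReal_one]
end

section
/- Let (Ω, 𝓕, P) be a probability space and let O : Ω → ℝ^n and F : Ω → ℝ^n be measurable maps. For a sample set (ω₁, …, ω_N) ∈ Ω^N, define the probabilistic sim2real gap γ*_N = max_{1 ≤ l ≤ N} ‖O(ω_l) − F(ω_l)‖. Then for every ε ∈ [0,1], the product measure P^N of the set of sample tuples (ω₁, …, ω_N) ∈ Ω^N satisfying P[{ω ∈ Ω : ‖O(ω) − F(ω)‖ ≤ γ*_N}] ≥ 1 − ε is at least 1 − (1 − ε)^N. In other words, with confidence at least 1 − (1 − ε)^N, the scenario gap γ*_N upper-bounds the gap ‖O(ω) − F(ω)‖ for a freshly sampled ω with probability at least 1 − ε. -/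
/-!
Call a point `x` rare if `P {gap ≤ gap x} < 1 - ε`. The sets `{gap ≤ t}` increase with `t`, so the
rare points form the union of a chain of such sets, each of mass `< 1 - ε`, and continuity from
below gives `P (rare) ≤ 1 - ε`. As soon as one sample is not rare, `γ*_N` dominates its gap and the
event holds; all `N` samples are rare with probability at most `(1 - ε) ^ N`.
-/

open MeasureTheory Set

theorem measure_preimage_le_of_isLowerSet {Ω : Type*} [MeasurableSpace Ω] (μ : Measure Ω)
    (g : Ω → ℝ) {S : Set ℝ} (hS : IsLowerSet S) {c : ENNReal}
    (hc : ∀ t ∈ S, μ (g ⁻¹' Iic t) ≤ c) : μ (g ⁻¹' S) ≤ c := by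
  -- The order topology on `S` makes `atTop` countably generated, as continuity from below needs.
  have := hS.ordConnected
  have hunion : g ⁻¹' S = ⋃ t : S, g ⁻¹' Iic (t : ℝ) := by
    ext x
    simp only [mem_preimage, mem_iUnion, mem_Iic, Subtype.exists, exists_prop]
    exact ⟨fun hx => ⟨g x, hx, le_rfl⟩, fun ⟨t, ht, hxt⟩ => hS hxt ht⟩
  have hmono : Monotone fun t : S => g ⁻¹' Iic (t : ℝ) :=
    fun _ _ hst => preimage_mono (Iic_subset_Iic.mpr hst)
  rw [hunion, hmono.measure_iUnion]
  exact iSup_le fun t => hc t t.2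

theorem measure_setOf_measure_le_lt_le {Ω : Type*} [MeasurableSpace Ω] (μ : Measure Ω)
    (g : Ω → ℝ) (c : ENNReal) :
    μ {x | μ {y | g y ≤ g x} < c} ≤ c :=
  measure_preimage_le_of_isLowerSet μ g (S := {t | μ (g ⁻¹' Iic t) < c})
    (fun _ _ hst hs => (measure_mono (preimage_mono (Iic_subset_Iic.mpr hst))).trans_lt hs)
    fun _ ht => ht.le

theorem one_sub_prod_le_measure_pi_compl {ι : Type*} [Fintype ι] {α : ι → Type*}
    [∀ i, MeasurableSpace (α i)] (μ : ∀ i, Measure (α i)) [∀ i, IsProbabilityMeasure (μ i)]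
    (A : ∀ i, Set (α i)) : 1 - ∏ i, μ i (A i) ≤ Measure.pi μ (univ.pi A)ᶜ := by
  rw [← Measure.pi_pi, tsub_le_iff_left, ← measure_univ (μ := Measure.pi μ)]
  exact measure_univ_le_add_compl _

theorem sim2real_gap_quantification_general
    {Ω : Type*} [MeasurableSpace Ω] (P : Measure Ω) [IsProbabilityMeasure P]
    (n : ℕ) (O F : Ω → EuclideanSpace ℝ (Fin n))
    (N : ℕ) (hN : 0 < N) (ε : ℝ) (hε : ε ∈ Set.Icc (0 : ℝ) 1) :
    ENNReal.ofReal (1 - (1 - ε) ^ N) ≤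
      (Measure.pi fun _ : Fin N => P)
        {ω : Fin N → Ω |
          P {x : Ω |
              ‖O x - F x‖ ≤
                Finset.univ.sup'
                  (Finset.univ_nonempty_iff.mpr (Fin.pos_iff_nonempty.mp hN))
                  (fun l => ‖O (ω l) - F (ω l)‖)}
            ≥ ENNReal.ofReal (1 - ε)} := by
  set g : Ω → ℝ := fun x => ‖O x - F x‖
  set c := ENNReal.ofReal (1 - ε)
  set rare := {x | P {y | g y ≤ g x} < c}
  have hsub : (univ.pi fun _ : Fin N => rare)ᶜ ⊆ {ω | P {x | g x ≤ Finset.univ.sup'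
      (Finset.univ_nonempty_iff.mpr (Fin.pos_iff_nonempty.mp hN)) (fun l => g (ω l))} ≥ c} := by
    intro ω hω
    obtain ⟨l, -, hl⟩ := not_forall₂.mp hω
    exact (not_lt.mp hl).trans <|
      measure_mono fun _ hy => le_trans hy (Finset.le_sup' (fun l => g (ω l)) (Finset.mem_univ l))
  have h1ε : 0 ≤ 1 - ε := sub_nonneg.mpr hε.2
  calc ENNReal.ofReal (1 - (1 - ε) ^ N) = 1 - c ^ N := by
        rw [ENNReal.ofReal_sub _ (pow_nonneg h1ε N), ENNReal.ofReal_one, ENNReal.ofReal_pow h1ε]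
    _ ≤ 1 - ∏ _ : Fin N, P rare := by
        rw [Finset.prod_const, Finset.card_univ, Fintype.card_fin]
        gcongr
        exact measure_setOf_measure_le_lt_le P g c
    _ ≤ _ := one_sub_prod_le_measure_pi_compl _ _
    _ ≤ _ := measure_mono hsub

/-- Probabilistic sim2real gap quantification (Theorem 2 of the paper): letting
`γ*_N = max_l ‖O ωₗ - F ωₗ‖` be the scenario solution computed from `N` i.i.d. samples,
with confidence at least `1 - (1 - ε)^N` (under the `N`-fold product measure) the gap
`‖O ω - F ω‖` of a freshly sampled `ω` is at most `γ*_N` with probability at least `1 - ε`. -/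
theorem sim2real_gap_quantification
    {Ω : Type*} [MeasurableSpace Ω] (P : Measure Ω) [IsProbabilityMeasure P]
    (n : ℕ) (O F : Ω → EuclideanSpace ℝ (Fin n))
    (hO : Measurable O) (hF : Measurable F)
    (N : ℕ) (hN : 0 < N) (ε : ℝ) (hε : ε ∈ Set.Icc (0 : ℝ) 1) :
    ENNReal.ofReal (1 - (1 - ε) ^ N) ≤
      (Measure.pi fun _ : Fin N => P)
        {ω : Fin N → Ω |
          P {x : Ω |
              ‖O x - F x‖ ≤
                Finset.univ.sup'
                  (Finset.univ_nonempty_iff.mpr (Fin.pos_iff_nonempty.mp hN))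
                  (fun l => ‖O (ω l) - F (ω l)‖)}
            ≥ ENNReal.ofReal (1 - ε)} :=
  sim2real_gap_quantification_general P n O F N hN ε hε
end

section
/- Let (Ω, 𝓕, P) be a probability space and let s : Ω → ℝ be a measurable function (the safety value of a sampled closed-loop trajectory). For a sample set (ω₁, …, ω_N) ∈ Ω^N, define the minimum sampled safety value s*_N = min_{1 ≤ i ≤ N} s(ω_i). Then for every ε ∈ [0,1], the product measure P^N of the set of sample tuples (ω₁, …, ω_N) ∈ Ω^N satisfying P[{ω ∈ Ω : s(ω) ≥ s*_N}] ≥ 1 − ε is at least 1 − (1 − ε)^N. In other words, with confidence at least 1 − (1 − ε)^N, a freshly sampled safety value is at least s*_N with probability at least 1 − ε. -/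
/-!
If `G t = P {x | t ≤ s x}` is the tail function of the safety value, the set of trajectories `y`
with `G (s y) < 1 - ε` has probability at most `1 - ε`: by inner regularity it suffices to test
compact subsets `K` of `{t | G t < 1 - ε}`, and each such `K` lies above its least element.
A sample set fails the conclusion only when every sample lies in that set, since its minimum is
below each sample and `G` is antitone; independence bounds this by `(1 - ε) ^ N`.
-/

open MeasureTheory Set

open scoped ENNReal

section TailBound

variable {α : Type*} [LinearOrder α] [TopologicalSpace α] [MeasurableSpace α]

theorem measure_le_of_forall_measure_Ici_le [ClosedIicTopology α] {ν : Measure α}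
    [ν.InnerRegular] {U : Set α} (hU : MeasurableSet U) {c : ℝ≥0∞}
    (h : ∀ t ∈ U, ν (Ici t) ≤ c) : ν U ≤ c := by
  rw [hU.measure_eq_iSup_isCompact ν]
  refine iSup₂_le fun K hKU => iSup_le fun hK => ?_
  rcases K.eq_empty_or_nonempty with rfl | hne
  · simp
  obtain ⟨a, haK, ha⟩ := hK.exists_isLeast hne
  exact (measure_mono fun _ hx => ha hx).trans (h a (hKU haK))

theorem measure_setOf_measure_le_lt_le_s3 [OrderClosedTopology α] [BorelSpace α] [PolishSpace α]
    {Ω : Type*} [MeasurableSpace Ω] (P : Measure Ω) [IsFiniteMeasure P] {s : Ω → α}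
    (hs : Measurable s) (c : ℝ≥0∞) : P {y | P {x | s y ≤ s x} < c} ≤ c := by
  set U := {t | P {x | t ≤ s x} < c}
  have hU : IsUpperSet U := fun t t' htt' ht =>
    (measure_mono fun _ hx => htt'.trans hx).trans_lt ht
  have hUm : MeasurableSet U := hU.ordConnected.measurableSet
  calc P (s ⁻¹' U) = P.map s U := (Measure.map_apply hs hUm).symm
    _ ≤ c := measure_le_of_forall_measure_Ici_le hUm fun t ht => by
      rw [Measure.map_apply hs measurableSet_Ici]
      exact ht.le

end TailBound

theorem one_sub_measure_compl_le {Ω : Type*} [MeasurableSpace Ω] (μ : Measure Ω)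
    [IsProbabilityMeasure μ] (S : Set Ω) : 1 - μ Sᶜ ≤ μ S := by
  rw [tsub_le_iff_right, ← measure_univ (μ := μ)]
  exact measure_univ_le_add_compl S

/-- Safety-critical controller verification (Corollary 2 of the paper): letting
`s*_N = min_i s ωᵢ` be the minimum safety value over `N` i.i.d. sampled trajectories,
with confidence at least `1 - (1 - ε)^N` a freshly sampled safety value `s ω`
is at least `s*_N` with probability at least `1 - ε`. -/
theorem controller_verification
    {Ω : Type*} [MeasurableSpace Ω] (P : Measure Ω) [IsProbabilityMeasure P]
    (s : Ω → ℝ) (hs : Measurable s)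
    (N : ℕ) (hN : 0 < N) (ε : ℝ) (hε : ε ∈ Set.Icc (0 : ℝ) 1) :
    ENNReal.ofReal (1 - (1 - ε) ^ N) ≤
      (Measure.pi fun _ : Fin N => P)
        {ω : Fin N → Ω |
          P {x : Ω |
              s x ≥
                Finset.univ.inf'
                  (Finset.univ_nonempty_iff.mpr (Fin.pos_iff_nonempty.mp hN))
                  (fun i => s (ω i))}
            ≥ ENNReal.ofReal (1 - ε)} := by
  set c := ENNReal.ofReal (1 - ε)
  set C := {y | P {x | s y ≤ s x} < c}
  set S := {ω : Fin N → Ω | P {x | s x ≥ Finset.univ.inf'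
    (Finset.univ_nonempty_iff.mpr (Fin.pos_iff_nonempty.mp hN)) fun i => s (ω i)} ≥ c}
  have hS : Sᶜ ⊆ univ.pi fun _ => C := by
    intro ω hω i _
    refine lt_of_le_of_lt (measure_mono fun x hx => ?_) (lt_of_not_ge hω)
    exact (Finset.inf'_le (fun j => s (ω j)) (Finset.mem_univ i)).trans hx
  have hSc : (Measure.pi fun _ : Fin N => P) Sᶜ ≤ c ^ N := calc
    _ ≤ (Measure.pi fun _ : Fin N => P) (univ.pi fun _ => C) := measure_mono hS
    _ = P C ^ N := by simp [Measure.pi_pi]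
    _ ≤ c ^ N := pow_le_pow_left' (measure_setOf_measure_le_lt_le_s3 P hs c) N
  calc ENNReal.ofReal (1 - (1 - ε) ^ N) = 1 - c ^ N := by
        rw [ENNReal.ofReal_sub _ (pow_nonneg (sub_nonneg.2 hε.2) N), ENNReal.ofReal_one,
          ENNReal.ofReal_pow (sub_nonneg.2 hε.2)]
    _ ≤ 1 - (Measure.pi fun _ : Fin N => P) Sᶜ := tsub_le_tsub_left hSc 1
    _ ≤ _ := one_sub_measure_compl_le _ S
end
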